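/- arXiv:2307.00517 — 8 statements merged into one kernel-verified Lean document; each statement's English description precedes it below -/
import Mathlib

section
/- Let (u_{mn}) be a double sequence of real numbers and (P_m), (Q_n) strictly increasing unbounded sequences of positive reals. Then the following are equivalent: (i) for each ε > 0 there exist n₀ ∈ ℕ and λ, κ > 1 such that u_{ij} − u_{mn} ≥ −ε whenever n₀ ≤ m ≤ i, n₀ ≤ n ≤ j, P_i/P_m ≤ λ and Q_j/Q_n ≤ κ (slow decrease relative to both (P_m) and (Q_n)); (ii) for each ε > 0 there exist n₀ ∈ ℕ and 0 < λ', κ' < 1 such that u_{mn} − u_{ij} ≥ −ε whenever n₀ ≤ i ≤ m, n₀ ≤ j ≤ n, λ' P_m < P_i ≤ P_m and κ' Q_n < Q_j ≤ Q_n. -/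
open Filter

/-- Equivalence of the two forms of slow decrease relative to both (P_m) and (Q_n). -/
theorem stmt3 (u : ℕ → ℕ → ℝ) (P Q : ℕ → ℝ)
    (hPpos : ∀ m, 0 < P m) (hQpos : ∀ n, 0 < Q n)
    (hPmono : StrictMono P) (hQmono : StrictMono Q)
    (hPtop : Tendsto P atTop atTop) (hQtop : Tendsto Q atTop atTop) :
    (∀ ε > (0 : ℝ), ∃ n₀ : ℕ, ∃ l > (1 : ℝ), ∃ k > (1 : ℝ),
        ∀ m n i j : ℕ, n₀ ≤ m → n₀ ≤ n → m ≤ i → n ≤ j →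
          P i / P m ≤ l → Q j / Q n ≤ k → u i j - u m n ≥ -ε) ↔
    (∀ ε > (0 : ℝ), ∃ n₀ : ℕ, ∃ l' : ℝ, 0 < l' ∧ l' < 1 ∧ ∃ k' : ℝ, 0 < k' ∧ k' < 1 ∧
        ∀ m n i j : ℕ, n₀ ≤ i → n₀ ≤ j → i ≤ m → j ≤ n →
          l' * P m < P i → P i ≤ P m → k' * Q n < Q j → Q j ≤ Q n →
          u m n - u i j ≥ -ε) := by
  constructor
  · intro h ε hε
    obtain ⟨n₀, l, hl, k, hk, H⟩ := h ε hε
    have hl0 : (0:ℝ) < l := lt_trans one_pos hl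
    have hk0 : (0:ℝ) < k := lt_trans one_pos hk
    refine ⟨n₀, 1/l, by positivity, (div_lt_one hl0).2 hl, 1/k, by positivity,
      (div_lt_one hk0).2 hk, ?_⟩
    intro m n i j hi hj him hjn hlP _ hkQ _
    apply H i j m n hi hj him hjn
    · rw [div_le_iff₀ (hPpos i)]
      have h2 := mul_lt_mul_of_pos_left hlP hl0
      rw [← mul_assoc, mul_one_div_cancel hl0.ne', one_mul] at h2
      linarith
    · rw [div_le_iff₀ (hQpos j)]
      have h2 := mul_lt_mul_of_pos_left hkQ hk0
      rw [← mul_assoc, mul_one_div_cancel hk0.ne', one_mul] at h2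
      linarith
  · intro h ε hε
    obtain ⟨n₀, l', hl'0, hl'1, k', hk'0, hk'1, H⟩ := h ε hε
    have h1l : 1 < 1 / l' := by rw [lt_div_iff₀ hl'0]; linarith
    have h1k : 1 < 1 / k' := by rw [lt_div_iff₀ hk'0]; linarith
    have hinvl : l' * (1 / l') = 1 := mul_one_div_cancel hl'0.ne'
    have hinvk : k' * (1 / k') = 1 := mul_one_div_cancel hk'0.ne'
    refine ⟨n₀, (1 + 1/l')/2, by linarith, (1 + 1/k')/2, by linarith, ?_⟩
    intro m n i j hm hn hmi hnj hPl hQk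
    rw [div_le_iff₀ (hPpos m)] at hPl
    rw [div_le_iff₀ (hQpos n)] at hQk
    apply H i j m n hm hn hmi hnj
    · nlinarith [mul_le_mul_of_nonneg_left hPl hl'0.le, hPpos m, hinvl]
    · exact hPmono.monotone hmi
    · nlinarith [mul_le_mul_of_nonneg_left hQk hk'0.le, hQpos n, hinvk]
    · exact hQmono.monotone hnj
end

section
/- Let (u_{mn}) be a double sequence of real numbers and (P_m), (Q_n) strictly increasing unbounded sequences of positive reals. If (u_{mn}) is slowly decreasing relative to (P_m) in the strong sense and slowly decreasing relative to (Q_n), then (u_{mn}) is slowly decreasing relative to both (P_m) and (Q_n). -/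
open Filter

/-- If (u_{mn}) is slowly decreasing relative to (P_m) in the strong sense and slowly
decreasing relative to (Q_n), then it is slowly decreasing relative to both (P_m) and (Q_n). -/
theorem stmt4 (u : ℕ → ℕ → ℝ) (P Q : ℕ → ℝ)
    (hPpos : ∀ m, 0 < P m) (hQpos : ∀ n, 0 < Q n)
    (hPmono : StrictMono P) (hQmono : StrictMono Q)
    (hPtop : Tendsto P atTop atTop) (hQtop : Tendsto Q atTop atTop)
    (hstrong : ∀ ε > (0 : ℝ), ∃ n₀ : ℕ, ∃ l > (1 : ℝ), ∃ k > (1 : ℝ),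
      ∀ m n i j : ℕ, n₀ ≤ m → n₀ ≤ n → m ≤ i → n ≤ j →
        P i ≤ l * P m → Q j ≤ k * Q n → u i j - u m j ≥ -ε)
    (hQsd : ∀ ε > (0 : ℝ), ∃ n₀ : ℕ, ∃ k > (1 : ℝ),
      ∀ m n j : ℕ, n₀ ≤ m → n₀ ≤ n → n ≤ j → Q j ≤ k * Q n → u m j - u m n ≥ -ε) :
    ∀ ε > (0 : ℝ), ∃ n₀ : ℕ, ∃ l > (1 : ℝ), ∃ k > (1 : ℝ),
      ∀ m n i j : ℕ, n₀ ≤ m → n₀ ≤ n → m ≤ i → n ≤ j →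
        P i ≤ l * P m → Q j ≤ k * Q n → u i j - u m n ≥ -ε := by
  intro ε hε
  obtain ⟨n₁, l, hl, k₁, hk₁, H₁⟩ := hstrong (ε / 2) (by linarith)
  obtain ⟨n₂, k₂, hk₂, H₂⟩ := hQsd (ε / 2) (by linarith)
  refine ⟨max n₁ n₂, l, hl, min k₁ k₂, lt_min hk₁ hk₂, ?_⟩
  intro m n i j hm hn hmi hnj hP hQ
  have hQn := (hQpos n).le
  have h1 : Q j ≤ k₁ * Q n :=
    hQ.trans (mul_le_mul_of_nonneg_right (min_le_left _ _) hQn)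
  have h2 : Q j ≤ k₂ * Q n :=
    hQ.trans (mul_le_mul_of_nonneg_right (min_le_right _ _) hQn)
  have A := H₁ m n i j (le_of_max_le_left hm) (le_of_max_le_left hn) hmi hnj hP h1
  have B := H₂ m n j (le_of_max_le_right hm) (le_of_max_le_right hn) hnj h2
  linarith
end

section
/- Let (p_m), (q_n) be positive sequences with partial sums P_m = Σ_{i=0}^m p_i, Q_n = Σ_{j=0}^n q_j, let σ_{mn} = (1/(P_m Q_n)) Σ_{i=0}^m Σ_{j=0}^n p_i q_j u_{ij} be the weighted means of a double sequence (u_{mn}). Then for all μ > m and η > n: u_{mn} − σ_{mn} = [P_μQ_η/((P_μ−P_m)(Q_η−Q_n))](σ_{μη} − σ_{μn} − σ_{mη} + σ_{mn}) + [P_μ/(P_μ−P_m)](σ_{μn} − σ_{mn}) + [Q_η/(Q_η−Q_n)](σ_{mη} − σ_{mn}) − [1/((P_μ−P_m)(Q_η−Q_n))] Σ_{i=m+1}^{μ} Σ_{j=n+1}^{η} p_i q_j (u_{ij} − u_{mn}). -/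
/-!
Write `S a b = P a * Q b * σ a b` for the weighted partial sums. The block sum
`∑_{m<i≤μ} ∑_{n<j≤η} p i q j u i j` equals `S μ η - S μ n - S m η + S m n` by
inclusion–exclusion on rectangles, and subtracting `u m n` inside the block costs exactly
`(P μ - P m) * (Q η - Q n) * u m n`. Substituting both into the right-hand side leaves an
identity between rational functions of the `σ`'s, `P`'s and `Q`'s.
-/

open Finset

theorem Finset.sum_Icc_add_one_left_eq_sub {M : Type*} [AddCommGroup M] (f : ℕ → M) {a b : ℕ}
    (h : a ≤ b) :
    ∑ i ∈ Icc (a + 1) b, f i = ∑ i ∈ range (b + 1), f i - ∑ i ∈ range (a + 1), f i := by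
  rw [← Ico_add_one_right_eq_Icc, sum_Ico_eq_sub _ (by omega)]

theorem Finset.sum_Icc_sum_Icc_eq_inclusion_exclusion {M : Type*} [AddCommGroup M]
    (f : ℕ → ℕ → M) {m μ n η : ℕ} (hμ : m ≤ μ) (hη : n ≤ η) :
    ∑ i ∈ Icc (m + 1) μ, ∑ j ∈ Icc (n + 1) η, f i j =
      ∑ i ∈ range (μ + 1), ∑ j ∈ range (η + 1), f i j
        - ∑ i ∈ range (μ + 1), ∑ j ∈ range (n + 1), f i j
        - ∑ i ∈ range (m + 1), ∑ j ∈ range (η + 1), f i j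
        + ∑ i ∈ range (m + 1), ∑ j ∈ range (n + 1), f i j := by
  simp only [sum_Icc_add_one_left_eq_sub _ hη, sum_Icc_add_one_left_eq_sub _ hμ, sum_sub_distrib]
  abel

/-- Representation of u_{mn} - σ_{mn} for indices μ > m and η > n. -/
theorem stmt6 (u : ℕ → ℕ → ℝ) (p q : ℕ → ℝ)
    (hp : ∀ i, 0 < p i) (hq : ∀ j, 0 < q j)
    (P Q : ℕ → ℝ)
    (hP : ∀ m : ℕ, P m = ∑ i ∈ Finset.range (m + 1), p i)
    (hQ : ∀ n : ℕ, Q n = ∑ j ∈ Finset.range (n + 1), q j)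
    (σ : ℕ → ℕ → ℝ)
    (hσ : ∀ m n : ℕ, σ m n =
      (∑ i ∈ Finset.range (m + 1), ∑ j ∈ Finset.range (n + 1), p i * q j * u i j)
        / (P m * Q n))
    (m n μ η : ℕ) (hμ : m < μ) (hη : n < η) :
    u m n - σ m n =
      P μ * Q η / ((P μ - P m) * (Q η - Q n)) * (σ μ η - σ μ n - σ m η + σ m n)
      + P μ / (P μ - P m) * (σ μ n - σ m n)
      + Q η / (Q η - Q n) * (σ m η - σ m n)
      - (1 / ((P μ - P m) * (Q η - Q n))) *
          ∑ i ∈ Finset.Icc (m + 1) μ, ∑ j ∈ Finset.Icc (n + 1) η,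
            p i * q j * (u i j - u m n) := by
  have hPpos (a : ℕ) : 0 < P a := hP a ▸ sum_pos (fun i _ ↦ hp i) nonempty_range_add_one
  have hQpos (b : ℕ) : 0 < Q b := hQ b ▸ sum_pos (fun j _ ↦ hq j) nonempty_range_add_one
  have hΔP : P μ - P m = ∑ i ∈ Icc (m + 1) μ, p i := by
    rw [hP, hP, sum_Icc_add_one_left_eq_sub _ hμ.le]
  have hΔQ : Q η - Q n = ∑ j ∈ Icc (n + 1) η, q j := by
    rw [hQ, hQ, sum_Icc_add_one_left_eq_sub _ hη.le]
  have hΔPpos : 0 < P μ - P m := hΔP ▸ sum_pos (fun i _ ↦ hp i) (nonempty_Icc.2 hμ)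
  have hΔQpos : 0 < Q η - Q n := hΔQ ▸ sum_pos (fun j _ ↦ hq j) (nonempty_Icc.2 hη)
  have hS (a b : ℕ) : ∑ i ∈ range (a + 1), ∑ j ∈ range (b + 1), p i * q j * u i j
      = P a * Q b * σ a b := by
    rw [hσ, mul_div_cancel₀ _ (mul_pos (hPpos a) (hQpos b)).ne']
  have hblock : ∑ i ∈ Icc (m + 1) μ, ∑ j ∈ Icc (n + 1) η, p i * q j * (u i j - u m n)
      = P μ * Q η * σ μ η - P μ * Q n * σ μ n - P m * Q η * σ m η + P m * Q n * σ m n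
        - (P μ - P m) * (Q η - Q n) * u m n := by
    simp only [mul_sub, sum_sub_distrib, ← sum_mul, ← mul_sum, hΔP, hΔQ,
      sum_Icc_sum_Icc_eq_inclusion_exclusion _ hμ.le hη.le, hS]
  rw [hblock]
  field_simp
  ring
end

section
/- Let (p_m), (q_n) be positive sequences with partial sums P_m, Q_n and weighted means σ_{mn} = (1/(P_m Q_n)) Σ_{i=0}^m Σ_{j=0}^n p_i q_j u_{ij}. Then for all μ < m and η < n: u_{mn} − σ_{mn} = [P_μQ_η/((P_m−P_μ)(Q_n−Q_η))](σ_{mn} − σ_{μn} − σ_{mη} + σ_{μη}) + [P_μ/(P_m−P_μ)](σ_{mn} − σ_{μn}) + [Q_η/(Q_n−Q_η)](σ_{mn} − σ_{mη}) + [1/((P_m−P_μ)(Q_n−Q_η))] Σ_{i=μ+1}^{m} Σ_{j=η+1}^{n} p_i q_j (u_{mn} − u_{ij}). -/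
/-- Representation of u_{mn} - σ_{mn} for indices μ < m and η < n. -/
theorem stmt7 (u : ℕ → ℕ → ℝ) (p q : ℕ → ℝ)
    (hp : ∀ i, 0 < p i) (hq : ∀ j, 0 < q j)
    (P Q : ℕ → ℝ)
    (hP : ∀ m : ℕ, P m = ∑ i ∈ Finset.range (m + 1), p i)
    (hQ : ∀ n : ℕ, Q n = ∑ j ∈ Finset.range (n + 1), q j)
    (σ : ℕ → ℕ → ℝ)
    (hσ : ∀ m n : ℕ, σ m n =
      (∑ i ∈ Finset.range (m + 1), ∑ j ∈ Finset.range (n + 1), p i * q j * u i j)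
        / (P m * Q n))
    (m n μ η : ℕ) (hμ : μ < m) (hη : η < n) :
    u m n - σ m n =
      P μ * Q η / ((P m - P μ) * (Q n - Q η)) * (σ m n - σ μ n - σ m η + σ μ η)
      + P μ / (P m - P μ) * (σ m n - σ μ n)
      + Q η / (Q n - Q η) * (σ m n - σ m η)
      + (1 / ((P m - P μ) * (Q n - Q η))) *
          ∑ i ∈ Finset.Icc (μ + 1) m, ∑ j ∈ Finset.Icc (η + 1) n,
            p i * q j * (u m n - u i j) := by
  have key : ∀ (f : ℕ → ℝ) (a b : ℕ), a < b →
      ∑ i ∈ Finset.Icc (a+1) b, f i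
        = ∑ i ∈ Finset.range (b+1), f i - ∑ i ∈ Finset.range (a+1), f i := by
    intro f a b hab
    rw [show Finset.Icc (a+1) b = Finset.Ico (a+1) (b+1) by rw [Finset.Ico_add_one_right_eq_Icc],
      Finset.sum_Ico_eq_sub _ (by omega)]
  have hPpos : ∀ k, 0 < P k := fun k => by
    rw [hP]
    exact Finset.sum_pos (fun i _ => hp i)
      (Finset.nonempty_range_iff.mpr (Nat.succ_ne_zero k))
  have hQpos : ∀ k, 0 < Q k := fun k => by
    rw [hQ]
    exact Finset.sum_pos (fun j _ => hq j)
      (Finset.nonempty_range_iff.mpr (Nat.succ_ne_zero k))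
  have hPdiff : 0 < P m - P μ := by
    rw [hP, hP, ← key p μ m hμ]
    exact Finset.sum_pos (fun i _ => hp i) ⟨μ + 1, Finset.mem_Icc.mpr ⟨le_rfl, hμ⟩⟩
  have hQdiff : 0 < Q n - Q η := by
    rw [hQ, hQ, ← key q η n hη]
    exact Finset.sum_pos (fun j _ => hq j) ⟨η + 1, Finset.mem_Icc.mpr ⟨le_rfl, hη⟩⟩
  set S : ℕ → ℕ → ℝ := fun a b =>
    ∑ i ∈ Finset.range (a + 1), ∑ j ∈ Finset.range (b + 1), p i * q j * u i j with hS
  -- inner sum identity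
  have hinner : ∀ i, ∑ j ∈ Finset.Icc (η+1) n, p i * q j * u i j
      = ∑ j ∈ Finset.range (n+1), p i * q j * u i j
        - ∑ j ∈ Finset.range (η+1), p i * q j * u i j := fun i =>
    key (fun j => p i * q j * u i j) η n hη
  have hdouble : ∑ i ∈ Finset.Icc (μ+1) m, ∑ j ∈ Finset.Icc (η+1) n, p i * q j * u i j
      = S m n - S μ n - (S m η - S μ η) := by
    calc ∑ i ∈ Finset.Icc (μ+1) m, ∑ j ∈ Finset.Icc (η+1) n, p i * q j * u i j
        = ∑ i ∈ Finset.Icc (μ+1) m, (∑ j ∈ Finset.range (n+1), p i * q j * u i j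
            - ∑ j ∈ Finset.range (η+1), p i * q j * u i j) := by
          exact Finset.sum_congr rfl fun i _ => hinner i
      _ = (∑ i ∈ Finset.Icc (μ+1) m, ∑ j ∈ Finset.range (n+1), p i * q j * u i j)
            - ∑ i ∈ Finset.Icc (μ+1) m, ∑ j ∈ Finset.range (η+1), p i * q j * u i j := by
          rw [Finset.sum_sub_distrib]
      _ = S m n - S μ n - (S m η - S μ η) := by
          rw [key (fun i => ∑ j ∈ Finset.range (n+1), p i * q j * u i j) μ m hμ,
            key (fun i => ∑ j ∈ Finset.range (η+1), p i * q j * u i j) μ m hμ]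
  have hconst : ∑ i ∈ Finset.Icc (μ+1) m, ∑ j ∈ Finset.Icc (η+1) n, p i * q j * u m n
      = (P m - P μ) * (Q n - Q η) * u m n := by
    have : ∑ i ∈ Finset.Icc (μ+1) m, ∑ j ∈ Finset.Icc (η+1) n, p i * q j * u m n
        = (∑ i ∈ Finset.Icc (μ+1) m, p i) * (∑ j ∈ Finset.Icc (η+1) n, q j) * u m n := by
      rw [Finset.sum_mul, Finset.sum_mul]
      exact Finset.sum_congr rfl fun i _ => by
        rw [Finset.mul_sum, Finset.sum_mul]
    simp only [this, key p μ m hμ, key q η n hη, ← hP, ← hQ]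
  have hsum : ∑ i ∈ Finset.Icc (μ+1) m, ∑ j ∈ Finset.Icc (η+1) n,
      p i * q j * (u m n - u i j)
      = (P m - P μ) * (Q n - Q η) * u m n - (S m n - S μ n - (S m η - S μ η)) := by
    rw [← hconst, ← hdouble, ← Finset.sum_sub_distrib]
    exact Finset.sum_congr rfl fun i _ => by
      rw [← Finset.sum_sub_distrib]
      exact Finset.sum_congr rfl fun j _ => by ring
  have hσ' : ∀ a b, σ a b = S a b / (P a * Q b) := fun a b => hσ a b
  rw [hsum, hσ' m n, hσ' μ n, hσ' m η, hσ' μ η]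
  have h1 := (hPpos m).ne'
  have h2 := (hPpos μ).ne'
  have h3 := (hQpos n).ne'
  have h4 := (hQpos η).ne'
  have h5 := hPdiff.ne'
  have h6 := hQdiff.ne'
  field_simp
  ring
end

section
/- Let (p_m) be a positive sequence whose partial sums P_m are strictly increasing to infinity with P_{m−1}/P_m → 1 (so p_m/P_m → 0). Let (u_{mn}) be a double sequence of real numbers satisfying the one-sided Landau-type condition (P_m/p_m) (u_{mn} − u_{m−1,n}) ≥ −M for some constant M > 0 and all sufficiently large m, n. Then (u_{mn}) is slowly decreasing relative to (P_m), i.e., lim_{λ→1⁺} liminf_{m,n→∞} min_{i: P_m ≤ P_i ≤ λP_m} (u_{in} − u_{mn}) ≥ 0. -/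
open Filter

/-- A one-sided Landau-type condition with respect to (P_m) implies slow decrease
relative to (P_m). -/
theorem stmt8 (p P : ℕ → ℝ) (hp : ∀ m, 0 < p m)
    (hP : ∀ m : ℕ, P m = ∑ i ∈ Finset.range (m + 1), p i)
    (hPtop : Tendsto P atTop atTop)
    (hratio : Tendsto (fun m : ℕ => P (m - 1) / P m) atTop (nhds 1))
    (u : ℕ → ℕ → ℝ) (M : ℝ) (hM : 0 < M)
    (hLandau : ∃ n₁ : ℕ, ∀ m n : ℕ, n₁ ≤ m → n₁ ≤ n →
      P m / p m * (u m n - u (m - 1) n) ≥ -M) :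
    ∀ ε > (0 : ℝ), ∃ n₀ : ℕ, ∃ l > (1 : ℝ),
      ∀ m n i : ℕ, n₀ ≤ m → n₀ ≤ n → m ≤ i → P i ≤ l * P m →
        u i n - u m n ≥ -ε := by
  obtain ⟨n₁, hL⟩ := hLandau
  intro ε hε
  have hεM : 0 < ε / M := div_pos hε hM
  refine ⟨max n₁ 1, 1 + ε / M, by linarith, ?_⟩
  intro m n i hm hn hmi hPi
  have hPpos : ∀ k, 0 < P k := fun k => by
    rw [hP]; exact Finset.sum_pos (fun j _ => hp j) Finset.nonempty_range_add_one
  have hPsucc : ∀ k, P (k + 1) = P k + p (k + 1) := fun k => by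
    rw [hP, hP, Finset.sum_range_succ]
  have hPmono : Monotone P := monotone_nat_of_le_succ fun k => by
    have := hp (k + 1); rw [hPsucc]; linarith
  have hn₁n : n₁ ≤ n := le_trans (le_max_left n₁ 1) hn
  have hn₁m : n₁ ≤ m := le_trans (le_max_left n₁ 1) hm
  have key : ∀ j, m ≤ j → u j n - u m n ≥ -(M / P m) * (P j - P m) := by
    intro j hj
    induction j with
    | zero =>
      have hz : m = 0 := Nat.le_zero.mp hj
      subst hz; simp
    | succ k ih =>
      rcases Nat.lt_or_ge m (k + 1) with h | h
      · have hmk : m ≤ k := Nat.lt_succ_iff.mp h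
        have ihk := ih hmk
        have hL1 := hL (k + 1) n (le_trans hn₁m (Nat.le_succ_of_le hmk)) hn₁n
        simp only [Nat.add_sub_cancel] at hL1
        have hpk := hp (k + 1)
        have hPk1 := hPpos (k + 1)
        have hPm := hPpos m
        have h2 : -M * p (k + 1) ≤ P (k + 1) * (u (k + 1) n - u k n) := by
          calc -M * p (k + 1)
              ≤ (P (k + 1) / p (k + 1) * (u (k + 1) n - u k n)) * p (k + 1) := by nlinarith
            _ = P (k + 1) * (u (k + 1) n - u k n) := by field_simp
        have hdiff : u (k + 1) n - u k n ≥ -(M * p (k + 1) / P (k + 1)) := by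
          have hrw0 : -(M * p (k + 1) / P (k + 1)) = (-M * p (k + 1)) / P (k + 1) := by ring
          rw [ge_iff_le, hrw0, div_le_iff₀ hPk1]
          nlinarith [h2]
        have hPmk : P m ≤ P (k + 1) := hPmono (Nat.le_succ_of_le hmk)
        have hdd : M * p (k + 1) / P (k + 1) ≤ M * p (k + 1) / P m :=
          div_le_div_of_nonneg_left (by positivity) hPm hPmk
        have hrw : -(M / P m) * (P (k + 1) - P m)
            = -(M / P m) * (P k - P m) - M * p (k + 1) / P m := by
          rw [hPsucc]; field_simp; ring
        rw [hrw]
        have := hdiff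
        linarith
      · have : m = k + 1 := le_antisymm hj h
        subst this; simp
  have hkey := key i hmi
  have hPm := hPpos m
  have h3 : P i - P m ≤ ε / M * P m := by
    have : P i ≤ (1 + ε / M) * P m := hPi
    nlinarith
  have h4 : (M / P m) * (P i - P m) ≤ (M / P m) * (ε / M * P m) :=
    mul_le_mul_of_nonneg_left h3 (by positivity)
  have h5 : (M / P m) * (ε / M * P m) = ε := by field_simp
  have hPiPm : P m ≤ P i := hPmono hmi
  nlinarith
end

section
/- Let (p_m), (q_n) be positive sequences with partial sums P_m, Q_n strictly increasing to infinity, satisfying P_{m−1}/P_m → 1 and Q_{n−1}/Q_n → 1. Let (u_{mn}) be a double sequence of real numbers whose weighted means σ_{mn} = (1/(P_mQ_n)) Σ_{i=0}^m Σ_{j=0}^n p_i q_j u_{ij} are P-convergent to ℓ. If (u_{mn}) is slowly decreasing relative to (P_m), slowly decreasing relative to (Q_n), and slowly decreasing relative to (Q_n) in the strong sense, then (u_{mn}) is P-convergent to ℓ. -/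
/-!
Compare `u m n` with the weighted means of `u` over rectangles next to `(m, n)`. On
`(m, b] × (n, d]` with `P b ≤ l P m` and `Q d ≤ k Q n`, slow decrease relative to `P` and
strong slow decrease relative to `Q` give `u i j ≥ u m n - ε`. On `(a, m] × (c, n]` with
`P m ≤ l P (a + 1)` and `Q n ≤ k Q (c + 1)`, slow decrease relative to `P` and to `Q` give
`u i j ≤ u m n + ε`. By inclusion–exclusion the mean over a rectangle is a combination of the
means `σ` at its four corners. So it is close to `ℓ` once the weight of the rectangle is a fixed
fraction of `P b * Q d`. For the lower rectangles this holds automatically. For the upper ones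
`P (m - 1) / P m → 1` is needed, because it stops `P` from jumping past `l * P m` in one step.
-/

open Filter Finset

theorem Finset.sum_Ioc_eq_sub_sum_range {M : Type*} [AddCommGroup M] (f : ℕ → M) {a b : ℕ}
    (hab : a ≤ b) :
    ∑ i ∈ Ioc a b, f i = ∑ i ∈ range (b + 1), f i - ∑ i ∈ range (a + 1), f i := by
  rw [← Ico_add_one_add_one_eq_Ioc, sum_Ico_eq_sub _ (by omega)]

theorem Finset.sum_Ioc_sum_Ioc_eq {M : Type*} [AddCommGroup M] (w : ℕ → ℕ → M) {a b c d : ℕ}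
    (hab : a ≤ b) (hcd : c ≤ d) :
    ∑ i ∈ Ioc a b, ∑ j ∈ Ioc c d, w i j
      = ∑ i ∈ range (b + 1), ∑ j ∈ range (d + 1), w i j
        - ∑ i ∈ range (b + 1), ∑ j ∈ range (c + 1), w i j
        - ∑ i ∈ range (a + 1), ∑ j ∈ range (d + 1), w i j
        + ∑ i ∈ range (a + 1), ∑ j ∈ range (c + 1), w i j := by
  simp only [sum_Ioc_eq_sub_sum_range _ hcd, sum_sub_distrib, sum_Ioc_eq_sub_sum_range _ hab]
  abel

theorem pos_of_forall_eq_sum_range {p P : ℕ → ℝ} (hp : ∀ i, 0 < p i)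
    (hP : ∀ m, P m = ∑ i ∈ range (m + 1), p i) (m : ℕ) : 0 < P m :=
  hP m ▸ sum_pos (fun i _ => hp i) nonempty_range_add_one

theorem monotone_of_forall_eq_sum_range {p P : ℕ → ℝ} (hp : ∀ i, 0 ≤ p i)
    (hP : ∀ m, P m = ∑ i ∈ range (m + 1), p i) : Monotone P := fun a b h => by
  rw [hP, hP]
  exact sum_le_sum_of_subset_of_nonneg (range_mono (by omega)) fun i _ _ => hp i

theorem exists_le_lt_succ_of_tendsto_atTop {α : Type*} [LinearOrder α] [NoMaxOrder α]
    {P : ℕ → α} (hP : Tendsto P atTop atTop) {x : α} (hx : P 0 ≤ x) :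
    ∃ b, P b ≤ x ∧ x < P (b + 1) := by
  classical
  have hex : ∃ i, x < P (i + 1) :=
    ((hP.comp (tendsto_add_atTop_nat 1)).eventually_gt_atTop x).exists
  refine ⟨Nat.find hex, ?_, Nat.find_spec hex⟩
  rcases h : Nat.find hex with _ | b
  · exact hx
  · exact not_lt.1 (Nat.find_min hex (by omega : b < Nat.find hex))

theorem exists_upper_window {P : ℕ → ℝ} (hpos : ∀ m, 0 < P m) (hmono : Monotone P)
    (htop : Tendsto P atTop atTop) (hratio : Tendsto (fun m : ℕ => P (m - 1) / P m) atTop (nhds 1))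
    {l : ℝ} (hl : 1 < l) :
    ∃ θ > 0, ∀ᶠ m in atTop, ∃ b, m < b ∧ P b ≤ l * P m ∧ θ * P b ≤ P b - P m := by
  obtain ⟨μ, hμ, hμl⟩ : ∃ μ : ℝ, 1 < μ ∧ μ * μ = l :=
    ⟨√l, (Real.lt_sqrt zero_le_one).2 (by simpa using hl), Real.mul_self_sqrt (by linarith)⟩
  have hμ₀ : 0 < μ := by linarith
  have hstep : ∀ᶠ m in atTop, P (m + 1) ≤ μ * P m := by
    have h : Tendsto (fun m : ℕ => P m / P (m + 1)) atTop (nhds 1) := by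
      simpa [Function.comp_def] using hratio.comp (tendsto_add_atTop_nat 1)
    filter_upwards [h.eventually (eventually_gt_nhds (inv_lt_one_of_one_lt₀ hμ))] with m hm
    rw [lt_div_iff₀ (hpos _), inv_mul_lt_iff₀ hμ₀] at hm
    exact hm.le
  refine ⟨1 - μ⁻¹, sub_pos.2 (inv_lt_one_of_one_lt₀ hμ), ?_⟩
  obtain ⟨N, hN⟩ := eventually_atTop.1 hstep
  filter_upwards [eventually_ge_atTop N] with m hm
  obtain ⟨b, hb, hb₁⟩ := exists_le_lt_succ_of_tendsto_atTop htop
    ((hmono m.zero_le).trans (le_mul_of_one_le_left (hpos m).le hl.le))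
  have hmb : m < b := by
    by_contra! h
    have : μ * P m < l * P m := mul_lt_mul_of_pos_right (by nlinarith) (hpos m)
    linarith [hmono (Nat.succ_le_succ h), hN m hm]
  refine ⟨b, hmb, hb, ?_⟩
  have hμb : μ * (μ * P m) ≤ μ * P b :=
    calc μ * (μ * P m) = l * P m := by rw [← hμl, mul_assoc]
      _ ≤ P (b + 1) := hb₁.le
      _ ≤ μ * P b := hN b (by omega)
  have : P m ≤ μ⁻¹ * P b := by
    rw [le_inv_mul_iff₀ hμ₀]
    exact le_of_mul_le_mul_left hμb hμ₀
  linarith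

theorem exists_lower_window {P : ℕ → ℝ} (hmono : Monotone P) (htop : Tendsto P atTop atTop)
    {l : ℝ} (hl : 1 < l) :
    ∃ θ > 0, ∀ K, ∀ᶠ m in atTop, ∃ a, K ≤ a ∧ a < m ∧ P m ≤ l * P (a + 1) ∧
      θ * P m ≤ P m - P a := by
  have hl₀ : 0 < l := by linarith
  refine ⟨1 - l⁻¹, sub_pos.2 (inv_lt_one_of_one_lt₀ hl), fun K => ?_⟩
  filter_upwards [htop.eventually_gt_atTop (l * P K), htop.eventually_gt_atTop 0] with m hKm hm
  have hK : P K < l⁻¹ * P m := by rwa [lt_inv_mul_iff₀ hl₀]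
  obtain ⟨a, ha, ha₁⟩ :=
    exists_le_lt_succ_of_tendsto_atTop htop ((hmono K.zero_le).trans hK.le)
  refine ⟨a, ?_, ?_, ?_, by linarith⟩
  · by_contra! h
    linarith [hmono (show a + 1 ≤ K by omega)]
  · by_contra! h
    have : l⁻¹ * P m < P m := mul_lt_of_lt_one_left hm (inv_lt_one_of_one_lt₀ hl)
    linarith [hmono h]
  · exact ((inv_mul_lt_iff₀ hl₀).1 ha₁).le

section WeightedMeans

variable {ι κ : Type*} {A : Finset ι} {B : Finset κ} {p : ι → ℝ} {q : κ → ℝ} {u : ι → κ → ℝ}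
  {x : ℝ}

theorem mul_sum_mul_sum_le_sum_sum (hp : ∀ i ∈ A, 0 ≤ p i) (hq : ∀ j ∈ B, 0 ≤ q j)
    (hx : ∀ i ∈ A, ∀ j ∈ B, x ≤ u i j) :
    x * ((∑ i ∈ A, p i) * ∑ j ∈ B, q j) ≤ ∑ i ∈ A, ∑ j ∈ B, p i * q j * u i j := by
  rw [sum_mul_sum, mul_sum]
  refine sum_le_sum fun i hi => ?_
  rw [mul_sum]
  refine sum_le_sum fun j hj => ?_
  rw [mul_comm]
  exact mul_le_mul_of_nonneg_left (hx i hi j hj) (mul_nonneg (hp i hi) (hq j hj))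

theorem sum_sum_le_mul_sum_mul_sum (hp : ∀ i ∈ A, 0 ≤ p i) (hq : ∀ j ∈ B, 0 ≤ q j)
    (hx : ∀ i ∈ A, ∀ j ∈ B, u i j ≤ x) :
    ∑ i ∈ A, ∑ j ∈ B, p i * q j * u i j ≤ x * ((∑ i ∈ A, p i) * ∑ j ∈ B, q j) := by
  rw [sum_mul_sum, mul_sum]
  refine sum_le_sum fun i hi => ?_
  rw [mul_sum]
  refine sum_le_sum fun j hj => ?_
  rw [mul_comm x]
  exact mul_le_mul_of_nonneg_left (hx i hi j hj) (mul_nonneg (hp i hi) (hq j hj))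

end WeightedMeans

noncomputable def rectMean (p q : ℕ → ℝ) (u : ℕ → ℕ → ℝ) (a b c d : ℕ) : ℝ :=
  (∑ i ∈ Ioc a b, ∑ j ∈ Ioc c d, p i * q j * u i j) /
    ((∑ i ∈ Ioc a b, p i) * ∑ j ∈ Ioc c d, q j)

section RectMean

variable {p q : ℕ → ℝ} {u : ℕ → ℕ → ℝ} {a b c d : ℕ} {x : ℝ}

theorem sum_Ioc_mul_sum_Ioc_pos (hp : ∀ i, 0 < p i) (hq : ∀ j, 0 < q j) (hab : a < b)
    (hcd : c < d) : 0 < (∑ i ∈ Ioc a b, p i) * ∑ j ∈ Ioc c d, q j :=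
  mul_pos (sum_pos (fun i _ => hp i) (nonempty_Ioc.2 hab))
    (sum_pos (fun j _ => hq j) (nonempty_Ioc.2 hcd))

theorem le_rectMean (hp : ∀ i, 0 < p i) (hq : ∀ j, 0 < q j) (hab : a < b) (hcd : c < d)
    (hx : ∀ i ∈ Ioc a b, ∀ j ∈ Ioc c d, x ≤ u i j) : x ≤ rectMean p q u a b c d := by
  rw [rectMean, le_div_iff₀ (sum_Ioc_mul_sum_Ioc_pos hp hq hab hcd)]
  exact mul_sum_mul_sum_le_sum_sum (fun i _ => (hp i).le) (fun j _ => (hq j).le) hx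

theorem rectMean_le (hp : ∀ i, 0 < p i) (hq : ∀ j, 0 < q j) (hab : a < b) (hcd : c < d)
    (hx : ∀ i ∈ Ioc a b, ∀ j ∈ Ioc c d, u i j ≤ x) : rectMean p q u a b c d ≤ x := by
  rw [rectMean, div_le_iff₀ (sum_Ioc_mul_sum_Ioc_pos hp hq hab hcd)]
  exact sum_sum_le_mul_sum_mul_sum (fun i _ => (hp i).le) (fun j _ => (hq j).le) hx

end RectMean

theorem abs_corner_sum_sub_le {Pa Pb Qc Qd s₁ s₂ s₃ s₄ ℓ δ : ℝ} (hPa : 0 ≤ Pa) (hPab : Pa ≤ Pb)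
    (hQc : 0 ≤ Qc) (hQcd : Qc ≤ Qd) (h₁ : |s₁ - ℓ| ≤ δ) (h₂ : |s₂ - ℓ| ≤ δ) (h₃ : |s₃ - ℓ| ≤ δ)
    (h₄ : |s₄ - ℓ| ≤ δ) :
    |s₁ * (Pb * Qd) - s₂ * (Pb * Qc) - s₃ * (Pa * Qd) + s₄ * (Pa * Qc)
      - ℓ * ((Pb - Pa) * (Qd - Qc))| ≤ 4 * δ * (Pb * Qd) := by
  have term : ∀ {s X Y : ℝ}, |s - ℓ| ≤ δ → 0 ≤ X → X ≤ Pb → 0 ≤ Y → Y ≤ Qd →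
      |(s - ℓ) * (X * Y)| ≤ δ * (Pb * Qd) := fun hs hX hXP hY hYQ => by
    rw [abs_mul, abs_of_nonneg (mul_nonneg hX hY)]
    exact mul_le_mul hs (mul_le_mul hXP hYQ hY (hX.trans hXP)) (mul_nonneg hX hY)
      ((abs_nonneg _).trans hs)
  have t₁ := abs_le.1 (term h₁ (hPa.trans hPab) le_rfl (hQc.trans hQcd) le_rfl)
  have t₂ := abs_le.1 (term h₂ (hPa.trans hPab) le_rfl hQc hQcd)
  have t₃ := abs_le.1 (term h₃ hPa hPab (hQc.trans hQcd) le_rfl)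
  have t₄ := abs_le.1 (term h₄ hPa hPab hQc hQcd)
  rw [abs_le]
  constructor <;> linarith [t₁, t₂, t₃, t₄]

theorem abs_rectMean_sub_le {u : ℕ → ℕ → ℝ} {p q P Q : ℕ → ℝ} {σ : ℕ → ℕ → ℝ}
    (hp : ∀ i, 0 < p i) (hq : ∀ j, 0 < q j)
    (hP : ∀ m : ℕ, P m = ∑ i ∈ range (m + 1), p i)
    (hQ : ∀ n : ℕ, Q n = ∑ j ∈ range (n + 1), q j)
    (hσ : ∀ m n : ℕ, σ m n =
      (∑ i ∈ range (m + 1), ∑ j ∈ range (n + 1), p i * q j * u i j) / (P m * Q n))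
    {N a b c d : ℕ} (hNa : N ≤ a) (hab : a < b) (hNc : N ≤ c) (hcd : c < d) {ℓ δ θ η : ℝ}
    (hσℓ : ∀ x y, N ≤ x → N ≤ y → |σ x y - ℓ| ≤ δ) (hθ : 0 < θ) (hη : 0 < η)
    (hθP : θ * P b ≤ P b - P a) (hηQ : η * Q d ≤ Q d - Q c) :
    |rectMean p q u a b c d - ℓ| ≤ 4 * δ / (θ * η) := by
  have hPpos := pos_of_forall_eq_sum_range hp hP
  have hQpos := pos_of_forall_eq_sum_range hq hQ
  have hδ : 0 ≤ δ := (abs_nonneg _).trans (hσℓ a c hNa hNc)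
  have hS : ∀ x y, ∑ i ∈ range (x + 1), ∑ j ∈ range (y + 1), p i * q j * u i j
      = σ x y * (P x * Q y) := fun x y => by
    rw [hσ, div_mul_cancel₀ _ (mul_pos (hPpos x) (hQpos y)).ne']
  have hW : θ * η * (P b * Q d) ≤ (P b - P a) * (Q d - Q c) :=
    calc θ * η * (P b * Q d) = (θ * P b) * (η * Q d) := by ring
      _ ≤ _ := mul_le_mul hθP hηQ (mul_pos hη (hQpos d)).le ((mul_pos hθ (hPpos b)).le.trans hθP)
  have hWpos : 0 < (P b - P a) * (Q d - Q c) :=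
    lt_of_lt_of_le (mul_pos (mul_pos hθ hη) (mul_pos (hPpos b) (hQpos d))) hW
  have hcorner := abs_corner_sum_sub_le (hPpos a).le
    (show P a ≤ P b by linarith [mul_pos hθ (hPpos b)]) (hQpos c).le
    (show Q c ≤ Q d by linarith [mul_pos hη (hQpos d)])
    (hσℓ b d (by omega) (by omega)) (hσℓ b c (by omega) hNc) (hσℓ a d hNa (by omega))
    (hσℓ a c hNa hNc)
  rw [rectMean, sum_Ioc_eq_sub_sum_range p hab.le, sum_Ioc_eq_sub_sum_range q hcd.le, ← hP, ← hP,
    ← hQ, ← hQ, sum_Ioc_sum_Ioc_eq _ hab.le hcd.le, hS, hS, hS, hS, div_sub' hWpos.ne',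
    mul_comm _ ℓ, abs_div, abs_of_pos hWpos, div_le_div_iff₀ hWpos (mul_pos hθ hη)]
  calc _ ≤ 4 * δ * (P b * Q d) * (θ * η) := mul_le_mul_of_nonneg_right hcorner (by positivity)
    _ ≤ 4 * δ * ((P b - P a) * (Q d - Q c)) := by
      rw [mul_assoc, mul_comm (P b * Q d)]
      exact mul_le_mul_of_nonneg_left hW (by positivity)

theorem exists_forall_le_add {u : ℕ → ℕ → ℝ} {p q P Q : ℕ → ℝ} {σ : ℕ → ℕ → ℝ} {ℓ : ℝ}
    (hp : ∀ m, 0 < p m) (hq : ∀ n, 0 < q n)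
    (hP : ∀ m : ℕ, P m = ∑ i ∈ range (m + 1), p i)
    (hQ : ∀ n : ℕ, Q n = ∑ j ∈ range (n + 1), q j)
    (hPtop : Tendsto P atTop atTop) (hQtop : Tendsto Q atTop atTop)
    (hPratio : Tendsto (fun m : ℕ => P (m - 1) / P m) atTop (nhds 1))
    (hQratio : Tendsto (fun n : ℕ => Q (n - 1) / Q n) atTop (nhds 1))
    (hσ : ∀ m n : ℕ, σ m n =
      (∑ i ∈ range (m + 1), ∑ j ∈ range (n + 1), p i * q j * u i j) / (P m * Q n))
    (hsum : ∀ ε > (0 : ℝ), ∃ n₀ : ℕ, ∀ m n : ℕ, n₀ ≤ m → n₀ ≤ n → |σ m n - ℓ| < ε)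
    (hSDP : ∀ ε > (0 : ℝ), ∃ n₀ : ℕ, ∃ l > (1 : ℝ),
      ∀ m n i : ℕ, n₀ ≤ m → n₀ ≤ n → m ≤ i → P i ≤ l * P m → u i n - u m n ≥ -ε)
    (hSDQstrong : ∀ ε > (0 : ℝ), ∃ n₀ : ℕ, ∃ l > (1 : ℝ), ∃ k > (1 : ℝ),
      ∀ m n i j : ℕ, n₀ ≤ m → n₀ ≤ n → m ≤ i → n ≤ j →
        P i ≤ l * P m → Q j ≤ k * Q n → u i j - u i n ≥ -ε)
    {ε : ℝ} (hε : 0 < ε) :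
    ∃ n₀ : ℕ, ∀ m n : ℕ, n₀ ≤ m → n₀ ≤ n → u m n ≤ ℓ + ε := by
  have hPpos := pos_of_forall_eq_sum_range hp hP
  have hQpos := pos_of_forall_eq_sum_range hq hQ
  have hPmono := monotone_of_forall_eq_sum_range (fun i => (hp i).le) hP
  have hQmono := monotone_of_forall_eq_sum_range (fun j => (hq j).le) hQ
  obtain ⟨n₁, l₁, hl₁, hSDP⟩ := hSDP (ε / 4) (by positivity)
  obtain ⟨n₃, l₃, hl₃, k₃, hk₃, hSDQ⟩ := hSDQstrong (ε / 4) (by positivity)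
  obtain ⟨θ, hθ, hwinP⟩ := exists_upper_window hPpos hPmono hPtop hPratio (lt_min hl₁ hl₃)
  obtain ⟨η, hη, hwinQ⟩ := exists_upper_window hQpos hQmono hQtop hQratio hk₃
  obtain ⟨N, hN⟩ := hsum (θ * η * ε / 8) (by positivity)
  obtain ⟨M, hM⟩ := eventually_atTop.1 (hwinP.and hwinQ)
  refine ⟨max M (max N (max n₁ n₃)), fun m n hm hn => ?_⟩
  obtain ⟨b, hmb, hbl, hθb⟩ := (hM m (le_of_max_le_left hm)).1
  obtain ⟨d, hnd, hdk, hηd⟩ := (hM n (le_of_max_le_left hn)).2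
  have hrect : ∀ i ∈ Ioc m b, ∀ j ∈ Ioc n d, u m n - ε / 2 ≤ u i j := by
    intro i hi j hj
    rw [mem_Ioc] at hi hj
    have hPi : P i ≤ min l₁ l₃ * P m := (hPmono hi.2).trans hbl
    have h₁ := hSDP m n i (by omega) (by omega) hi.1.le
      (hPi.trans (mul_le_mul_of_nonneg_right (min_le_left _ _) (hPpos m).le))
    have h₂ := hSDQ m n i j (by omega) (by omega) hi.1.le hj.1.le
      (hPi.trans (mul_le_mul_of_nonneg_right (min_le_right _ _) (hPpos m).le))
      ((hQmono hj.2).trans hdk)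
    linarith
  have hmean := abs_le.1 (abs_rectMean_sub_le hp hq hP hQ hσ (N := N) (by omega) hmb
    (by omega) hnd (fun x y hx hy => (hN x y hx hy).le) hθ hη hθb hηd)
  have hδ : 4 * (θ * η * ε / 8) / (θ * η) = ε / 2 := by field_simp; ring
  linarith [le_rectMean hp hq hmb hnd hrect]

theorem exists_forall_sub_le {u : ℕ → ℕ → ℝ} {p q P Q : ℕ → ℝ} {σ : ℕ → ℕ → ℝ} {ℓ : ℝ}
    (hp : ∀ m, 0 < p m) (hq : ∀ n, 0 < q n)
    (hP : ∀ m : ℕ, P m = ∑ i ∈ range (m + 1), p i)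
    (hQ : ∀ n : ℕ, Q n = ∑ j ∈ range (n + 1), q j)
    (hPtop : Tendsto P atTop atTop) (hQtop : Tendsto Q atTop atTop)
    (hσ : ∀ m n : ℕ, σ m n =
      (∑ i ∈ range (m + 1), ∑ j ∈ range (n + 1), p i * q j * u i j) / (P m * Q n))
    (hsum : ∀ ε > (0 : ℝ), ∃ n₀ : ℕ, ∀ m n : ℕ, n₀ ≤ m → n₀ ≤ n → |σ m n - ℓ| < ε)
    (hSDP : ∀ ε > (0 : ℝ), ∃ n₀ : ℕ, ∃ l > (1 : ℝ),
      ∀ m n i : ℕ, n₀ ≤ m → n₀ ≤ n → m ≤ i → P i ≤ l * P m → u i n - u m n ≥ -ε)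
    (hSDQ : ∀ ε > (0 : ℝ), ∃ n₀ : ℕ, ∃ k > (1 : ℝ),
      ∀ m n j : ℕ, n₀ ≤ m → n₀ ≤ n → n ≤ j → Q j ≤ k * Q n → u m j - u m n ≥ -ε)
    {ε : ℝ} (hε : 0 < ε) :
    ∃ n₀ : ℕ, ∀ m n : ℕ, n₀ ≤ m → n₀ ≤ n → ℓ - ε ≤ u m n := by
  have hPmono := monotone_of_forall_eq_sum_range (fun i => (hp i).le) hP
  have hQmono := monotone_of_forall_eq_sum_range (fun j => (hq j).le) hQ
  obtain ⟨n₁, l₁, hl₁, hSDP⟩ := hSDP (ε / 4) (by positivity)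
  obtain ⟨n₂, k₂, hk₂, hSDQ⟩ := hSDQ (ε / 4) (by positivity)
  obtain ⟨θ, hθ, hwinP⟩ := exists_lower_window hPmono hPtop hl₁
  obtain ⟨η, hη, hwinQ⟩ := exists_lower_window hQmono hQtop hk₂
  obtain ⟨N, hN⟩ := hsum (θ * η * ε / 8) (by positivity)
  obtain ⟨M, hM⟩ := eventually_atTop.1
    ((hwinP (max N (max n₁ n₂))).and (hwinQ (max N (max n₁ n₂))))
  refine ⟨M, fun m n hm hn => ?_⟩
  obtain ⟨a, hKa, ham, hPa, hθa⟩ := (hM m hm).1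
  obtain ⟨c, hKc, hcn, hQc, hηc⟩ := (hM n hn).2
  have hrect : ∀ i ∈ Ioc a m, ∀ j ∈ Ioc c n, u i j ≤ u m n + ε / 2 := by
    intro i hi j hj
    rw [mem_Ioc] at hi hj
    have h₁ := hSDP i n m (by omega) (by omega) hi.2
      (hPa.trans (mul_le_mul_of_nonneg_left (hPmono hi.1) (by linarith)))
    have h₂ := hSDQ i j n (by omega) (by omega) hj.2
      (hQc.trans (mul_le_mul_of_nonneg_left (hQmono hj.1) (by linarith)))
    linarith
  have hmean := abs_le.1 (abs_rectMean_sub_le hp hq hP hQ hσ (N := N) (by omega) ham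
    (by omega) hcn (fun x y hx hy => (hN x y hx hy).le) hθ hη hθa hηc)
  have hδ : 4 * (θ * η * ε / 8) / (θ * η) = ε / 2 := by field_simp; ring
  linarith [rectMean_le hp hq ham hcn hrect]

/-- Tauberian theorem: if the weighted means of a real double sequence are Pringsheim
convergent to ℓ and the sequence is slowly decreasing relative to (P_m), relative to (Q_n),
and relative to (Q_n) in the strong sense, then the sequence is Pringsheim convergent to ℓ. -/
theorem stmt10 (u : ℕ → ℕ → ℝ) (p q : ℕ → ℝ)
    (hp : ∀ m, 0 < p m) (hq : ∀ n, 0 < q n)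
    (P Q : ℕ → ℝ)
    (hP : ∀ m : ℕ, P m = ∑ i ∈ Finset.range (m + 1), p i)
    (hQ : ∀ n : ℕ, Q n = ∑ j ∈ Finset.range (n + 1), q j)
    (hPtop : Tendsto P atTop atTop) (hQtop : Tendsto Q atTop atTop)
    (hPratio : Tendsto (fun m : ℕ => P (m - 1) / P m) atTop (nhds 1))
    (hQratio : Tendsto (fun n : ℕ => Q (n - 1) / Q n) atTop (nhds 1))
    (σ : ℕ → ℕ → ℝ)
    (hσ : ∀ m n : ℕ, σ m n =
      (∑ i ∈ Finset.range (m + 1), ∑ j ∈ Finset.range (n + 1), p i * q j * u i j)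
        / (P m * Q n))
    (ℓ : ℝ)
    (hsum : ∀ ε > (0 : ℝ), ∃ n₀ : ℕ, ∀ m n : ℕ, n₀ ≤ m → n₀ ≤ n → |σ m n - ℓ| < ε)
    (hSDP : ∀ ε > (0 : ℝ), ∃ n₀ : ℕ, ∃ l > (1 : ℝ),
      ∀ m n i : ℕ, n₀ ≤ m → n₀ ≤ n → m ≤ i → P i ≤ l * P m → u i n - u m n ≥ -ε)
    (hSDQ : ∀ ε > (0 : ℝ), ∃ n₀ : ℕ, ∃ k > (1 : ℝ),
      ∀ m n j : ℕ, n₀ ≤ m → n₀ ≤ n → n ≤ j → Q j ≤ k * Q n → u m j - u m n ≥ -ε)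
    (hSDQstrong : ∀ ε > (0 : ℝ), ∃ n₀ : ℕ, ∃ l > (1 : ℝ), ∃ k > (1 : ℝ),
      ∀ m n i j : ℕ, n₀ ≤ m → n₀ ≤ n → m ≤ i → n ≤ j →
        P i ≤ l * P m → Q j ≤ k * Q n → u i j - u i n ≥ -ε) :
    ∀ ε > (0 : ℝ), ∃ n₀ : ℕ, ∀ m n : ℕ, n₀ ≤ m → n₀ ≤ n → |u m n - ℓ| < ε := by
  intro ε hε
  obtain ⟨N₁, hupper⟩ := exists_forall_le_add hp hq hP hQ hPtop hQtop hPratio hQratio hσ hsum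
    hSDP hSDQstrong (half_pos hε)
  obtain ⟨N₂, hlower⟩ := exists_forall_sub_le hp hq hP hQ hPtop hQtop hσ hsum hSDP hSDQ
    (half_pos hε)
  refine ⟨max N₁ N₂, fun m n hm hn => abs_sub_lt_iff.2 ⟨?_, ?_⟩⟩
  · linarith [hupper m n (le_of_max_le_left hm) (le_of_max_le_left hn)]
  · linarith [hlower m n (le_of_max_le_right hm) (le_of_max_le_right hn)]
end

section
/- Let (p_m), (q_n) be positive sequences with partial sums P_m, Q_n strictly increasing to infinity, satisfying P_{m−1}/P_m → 1 and Q_{n−1}/Q_n → 1. Let (u_{mn}) be a double sequence of complex numbers whose weighted means σ_{mn} are P-convergent to ℓ. If there exists M > 0 such that |(P_m/p_m)(u_{mn} − u_{m−1,n})| ≤ M and |(Q_n/q_n)(u_{mn} − u_{m,n−1})| ≤ M for all sufficiently large m, n, then (u_{mn}) is P-convergent to ℓ. -/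
open Filter

set_option maxHeartbeats 1000000

/-- Tauberian theorem with Hardy-type conditions for complex double sequences. -/
theorem stmt13 (u : ℕ → ℕ → ℂ) (p q : ℕ → ℝ)
    (hp : ∀ m, 0 < p m) (hq : ∀ n, 0 < q n)
    (P Q : ℕ → ℝ)
    (hP : ∀ m : ℕ, P m = ∑ i ∈ Finset.range (m + 1), p i)
    (hQ : ∀ n : ℕ, Q n = ∑ j ∈ Finset.range (n + 1), q j)
    (hPtop : Tendsto P atTop atTop) (hQtop : Tendsto Q atTop atTop)
    (hPratio : Tendsto (fun m : ℕ => P (m - 1) / P m) atTop (nhds 1))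
    (hQratio : Tendsto (fun n : ℕ => Q (n - 1) / Q n) atTop (nhds 1))
    (σ : ℕ → ℕ → ℂ)
    (hσ : ∀ m n : ℕ, σ m n =
      (∑ i ∈ Finset.range (m + 1), ∑ j ∈ Finset.range (n + 1),
        (p i * q j : ℝ) * u i j) / ((P m * Q n : ℝ) : ℂ))
    (ℓ : ℂ)
    (hsum : ∀ ε > (0 : ℝ), ∃ n₀ : ℕ, ∀ m n : ℕ, n₀ ≤ m → n₀ ≤ n → ‖σ m n - ℓ‖ < ε)
    (M : ℝ) (hM : 0 < M)
    (hHardy : ∃ n₁ : ℕ, ∀ m n : ℕ, n₁ ≤ m → n₁ ≤ n →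
      P m / p m * ‖u m n - u (m - 1) n‖ ≤ M ∧
      Q n / q n * ‖u m n - u m (n - 1)‖ ≤ M) :
    ∀ ε > (0 : ℝ), ∃ n₀ : ℕ, ∀ m n : ℕ, n₀ ≤ m → n₀ ≤ n → ‖u m n - ℓ‖ < ε := by
  intro ε hε
  obtain ⟨n₁, hHardy⟩ := hHardy
  -- basic positivity / monotonicity
  have hPpos : ∀ m, 0 < P m := fun m => by
    rw [hP]; exact Finset.sum_pos (fun i _ => hp i) (by simp)
  have hQpos : ∀ n, 0 < Q n := fun n => by
    rw [hQ]; exact Finset.sum_pos (fun j _ => hq j) (by simp)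
  have hPsucc : ∀ k, P (k + 1) = P k + p (k + 1) := fun k => by
    rw [hP, hP, Finset.sum_range_succ]
  have hQsucc : ∀ k, Q (k + 1) = Q k + q (k + 1) := fun k => by
    rw [hQ, hQ, Finset.sum_range_succ]
  have hPmono : Monotone P := monotone_nat_of_le_succ (fun k => by
    rw [hPsucc]; linarith [hp (k + 1)])
  have hQmono : Monotone Q := monotone_nat_of_le_succ (fun k => by
    rw [hQsucc]; linarith [hq (k + 1)])
  -- choice of θ
  set θ : ℝ := min (1/3) (ε / (16 * M)) with hθdef
  have hθpos : 0 < θ := lt_min (by norm_num) (div_pos hε (by linarith))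
  have hθ3 : θ ≤ 1/3 := min_le_left _ _
  have hθε : 4 * M * θ ≤ ε / 4 := by
    have h1 : θ ≤ ε / (16 * M) := min_le_right _ _
    have := (le_div_iff₀ (by linarith : (0:ℝ) < 16 * M)).mp h1
    nlinarith
  -- eventual smallness of p k / P k and q k / Q k
  have hratio : ∀ (R : ℕ → ℝ) (r : ℕ → ℝ), (∀ k, 0 < R k) →
      (∀ k, R (k + 1) = R k + r (k + 1)) →
      Tendsto (fun k : ℕ => R (k - 1) / R k) atTop (nhds 1) →
      ∃ N : ℕ, 1 ≤ N ∧ ∀ k, N ≤ k → r k ≤ θ / 2 * R k := by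
    intro R r hRpos hRsucc hR
    obtain ⟨N, hN⟩ := Metric.tendsto_atTop.mp hR (θ / 2) (by linarith)
    refine ⟨max N 1, le_max_right _ _, fun k hk => ?_⟩
    obtain ⟨t, rfl⟩ : ∃ t, k = t + 1 := ⟨k - 1, by omega⟩
    have h := hN (t + 1) (le_trans (le_max_left _ _) hk)
    rw [Real.dist_eq, abs_sub_lt_iff] at h
    have h2 : 1 - R ((t + 1) - 1) / R (t + 1) < θ / 2 := h.2
    simp only [Nat.add_sub_cancel] at h2
    have hRk := hRpos (t + 1)
    have : (1 - θ / 2) * R (t + 1) < R t := by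
      have h3 : 1 - θ / 2 < R t / R (t + 1) := by linarith
      exact (lt_div_iff₀ hRk).mp h3
    have := hRsucc t
    nlinarith
  obtain ⟨Np, hNp1, hNp⟩ := hratio P p hPpos hPsucc hPratio
  obtain ⟨Nq, hNq1, hNq⟩ := hratio Q q hQpos hQsucc hQratio
  -- σ convergence threshold
  set ε₁ : ℝ := ε * θ ^ 2 / 48 with hε₁def
  have hε₁pos : 0 < ε₁ := by positivity
  obtain ⟨n₀, hσε⟩ := hsum ε₁ hε₁pos
  -- row and column oscillation bounds
  have row : ∀ j, n₁ ≤ j → ∀ m, n₁ ≤ m → ∀ i, m ≤ i →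
      ‖u i j - u m j‖ ≤ M * (P i - P m) / P m := by
    intro j hj m hm i hi
    induction i, hi using Nat.le_induction with
    | base => simp [le_div_iff₀ (hPpos m)]
    | succ i hi ih =>
      have hstep : ‖u (i + 1) j - u i j‖ ≤ M * p (i + 1) / P (i + 1) := by
        have h := (hHardy (i + 1) j (by omega) hj).1
        simp only [Nat.add_sub_cancel] at h
        have hpi := hp (i + 1)
        have hPi := hPpos (i + 1)
        rw [div_mul_eq_mul_div, div_le_iff₀ hpi] at h
        rw [le_div_iff₀ hPi]
        linarith
      have hmono : P m ≤ P (i + 1) := hPmono (by omega)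
      have h2 : M * p (i + 1) / P (i + 1) ≤ M * p (i + 1) / P m :=
        div_le_div_of_nonneg_left (mul_nonneg hM.le (hp (i + 1)).le) (hPpos m) hmono
      calc ‖u (i + 1) j - u m j‖ ≤ ‖u (i + 1) j - u i j‖ + ‖u i j - u m j‖ := by
            have := norm_sub_le_norm_sub_add_norm_sub (u (i+1) j) (u i j) (u m j)
            exact this
        _ ≤ M * p (i + 1) / P m + M * (P i - P m) / P m := by
            refine add_le_add (le_trans hstep h2) ih
        _ = M * (P (i + 1) - P m) / P m := by rw [hPsucc i]; ring
  have col : ∀ m, n₁ ≤ m → ∀ n, n₁ ≤ n → ∀ j, n ≤ j →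
      ‖u m j - u m n‖ ≤ M * (Q j - Q n) / Q n := by
    intro m hm n hn j hj
    induction j, hj using Nat.le_induction with
    | base => simp [le_div_iff₀ (hQpos n)]
    | succ j hj ih =>
      have hstep : ‖u m (j + 1) - u m j‖ ≤ M * q (j + 1) / Q (j + 1) := by
        have h := (hHardy m (j + 1) hm (by omega)).2
        simp only [Nat.add_sub_cancel] at h
        have hqj := hq (j + 1)
        have hQj := hQpos (j + 1)
        rw [div_mul_eq_mul_div, div_le_iff₀ hqj] at h
        rw [le_div_iff₀ hQj]
        linarith
      have hmono : Q n ≤ Q (j + 1) := hQmono (by omega)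
      have h2 : M * q (j + 1) / Q (j + 1) ≤ M * q (j + 1) / Q n :=
        div_le_div_of_nonneg_left (mul_nonneg hM.le (hq (j + 1)).le) (hQpos n) hmono
      calc ‖u m (j + 1) - u m n‖ ≤ ‖u m (j + 1) - u m j‖ + ‖u m j - u m n‖ :=
            norm_sub_le_norm_sub_add_norm_sub _ _ _
        _ ≤ M * q (j + 1) / Q n + M * (Q j - Q n) / Q n :=
            add_le_add (le_trans hstep h2) ih
        _ = M * (Q (j + 1) - Q n) / Q n := by rw [hQsucc j]; ring
  -- the main threshold
  refine ⟨max (max n₀ n₁) (max Np Nq), fun m n hm hn => ?_⟩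
  have hmn₀ : n₀ ≤ m := le_trans (le_trans (le_max_left _ _) (le_max_left _ _)) hm
  have hnn₀ : n₀ ≤ n := le_trans (le_trans (le_max_left _ _) (le_max_left _ _)) hn
  have hmn₁ : n₁ ≤ m := le_trans (le_trans (le_max_right _ _) (le_max_left _ _)) hm
  have hnn₁ : n₁ ≤ n := le_trans (le_trans (le_max_right _ _) (le_max_left _ _)) hn
  have hmNp : Np ≤ m := le_trans (le_trans (le_max_left _ _) (le_max_right _ _)) hm
  have hnNq : Nq ≤ n := le_trans (le_trans (le_max_right _ _) (le_max_right _ _)) hn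
  -- choose m' and n'
  have hexP : ∃ k, (1 + θ) * P m < P k := ((hPtop.eventually_gt_atTop _).exists)
  have hexQ : ∃ k, (1 + θ) * Q n < Q k := ((hQtop.eventually_gt_atTop _).exists)
  set m' := Nat.find hexP with hm'def
  set n' := Nat.find hexQ with hn'def
  have hm'1 : (1 + θ) * P m < P m' := Nat.find_spec hexP
  have hn'1 : (1 + θ) * Q n < Q n' := Nat.find_spec hexQ
  have hm'min : ∀ k, k < m' → P k ≤ (1 + θ) * P m := fun k hk =>
    le_of_not_gt (Nat.find_min hexP hk)
  have hn'min : ∀ k, k < n' → Q k ≤ (1 + θ) * Q n := fun k hk =>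
    le_of_not_gt (Nat.find_min hexQ hk)
  have hmm' : m < m' := by
    by_contra h
    have := hPmono (le_of_not_gt h)
    nlinarith [hPpos m]
  have hnn' : n < n' := by
    by_contra h
    have := hQmono (le_of_not_gt h)
    nlinarith [hQpos n]
  have hm'ub : P m' ≤ (1 + 2 * θ) * P m := by
    have h1 : P (m' - 1) ≤ (1 + θ) * P m := hm'min _ (by omega)
    have h2 : p m' ≤ θ / 2 * P m' := hNp m' (by omega)
    have h3 : P m' = P (m' - 1) + p m' := by
      have := hPsucc (m' - 1)
      rwa [show m' - 1 + 1 = m' from by omega] at this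
    nlinarith [hPpos m, hPpos m']
  have hn'ub : Q n' ≤ (1 + 2 * θ) * Q n := by
    have h1 : Q (n' - 1) ≤ (1 + θ) * Q n := hn'min _ (by omega)
    have h2 : q n' ≤ θ / 2 * Q n' := hNq n' (by omega)
    have h3 : Q n' = Q (n' - 1) + q n' := by
      have := hQsucc (n' - 1)
      rwa [show n' - 1 + 1 = n' from by omega] at this
    nlinarith [hQpos n, hQpos n']
  -- sums
  set S : ℕ → ℕ → ℂ := fun a b => ∑ i ∈ Finset.range (a + 1), ∑ j ∈ Finset.range (b + 1),
    ((p i * q j : ℝ) : ℂ) * u i j with hSdef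
  have hSσ : ∀ a b, S a b = ((P a * Q b : ℝ) : ℂ) * σ a b := by
    intro a b
    rw [hσ a b, mul_div_cancel₀]
    exact_mod_cast mul_ne_zero (ne_of_gt (hPpos a)) (ne_of_gt (hQpos b))
  set c : ℕ → ℕ → ℂ := fun i j => ((p i * q j : ℝ) : ℂ) * u i j with hcdef
  set W : ℂ := ∑ i ∈ Finset.Ico (m + 1) (m' + 1), ∑ j ∈ Finset.Ico (n + 1) (n' + 1), c i j with hWdef
  have hsp : ∑ i ∈ Finset.Ico (m + 1) (m' + 1), p i = P m' - P m := by
    rw [Finset.sum_Ico_eq_sub _ (by omega : m + 1 ≤ m' + 1), ← hP, ← hP]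
  have hsq : ∑ j ∈ Finset.Ico (n + 1) (n' + 1), q j = Q n' - Q n := by
    rw [Finset.sum_Ico_eq_sub _ (by omega : n + 1 ≤ n' + 1), ← hQ, ← hQ]
  have hW : W = S m' n' - S m n' - S m' n + S m n := by
    rw [hWdef]
    simp only [hcdef, hSdef]
    simp only [Finset.sum_Ico_eq_sub _ (by omega : n + 1 ≤ n' + 1)]
    rw [Finset.sum_sub_distrib, Finset.sum_Ico_eq_sub _ (by omega : m + 1 ≤ m' + 1),
      Finset.sum_Ico_eq_sub _ (by omega : m + 1 ≤ m' + 1)]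
    ring
  set D : ℝ := (P m' - P m) * (Q n' - Q n) with hDdef
  have hDpos : 0 < D := by
    apply mul_pos <;> nlinarith [hPpos m, hQpos n, hm'1, hn'1]
  have hDcR : (∑ i ∈ Finset.Ico (m + 1) (m' + 1), ∑ j ∈ Finset.Ico (n + 1) (n' + 1),
      p i * q j) = D := by
    rw [hDdef, ← hsp, ← hsq, Finset.sum_mul_sum]
  have hDc : (∑ i ∈ Finset.Ico (m + 1) (m' + 1), ∑ j ∈ Finset.Ico (n + 1) (n' + 1),
      ((p i * q j : ℝ) : ℂ)) = ((D : ℝ) : ℂ) := by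
    rw [← hDcR]
    push_cast
    rfl
  -- estimate 1 : oscillation
  have hosc : ∀ i ∈ Finset.Ico (m + 1) (m' + 1), ∀ j ∈ Finset.Ico (n + 1) (n' + 1),
      ‖u i j - u m n‖ ≤ 4 * M * θ := by
    intro i hi j hj
    rw [Finset.mem_Ico] at hi hj
    have hri : ‖u i j - u m j‖ ≤ M * (P i - P m) / P m :=
      row j (by omega) m hmn₁ i (by omega)
    have hcj : ‖u m j - u m n‖ ≤ M * (Q j - Q n) / Q n :=
      col m hmn₁ n hnn₁ j (by omega)
    have hPi : P i ≤ P m' := hPmono (by omega)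
    have hQj : Q j ≤ Q n' := hQmono (by omega)
    have h1 : M * (P i - P m) / P m ≤ 2 * M * θ := by
      rw [div_le_iff₀ (hPpos m)]
      have hh : P i - P m ≤ 2 * θ * P m := by linarith [hPi, hm'ub]
      calc M * (P i - P m) ≤ M * (2 * θ * P m) := mul_le_mul_of_nonneg_left hh hM.le
        _ = 2 * M * θ * P m := by ring
    have h2 : M * (Q j - Q n) / Q n ≤ 2 * M * θ := by
      rw [div_le_iff₀ (hQpos n)]
      have hh : Q j - Q n ≤ 2 * θ * Q n := by linarith [hQj, hn'ub]
      calc M * (Q j - Q n) ≤ M * (2 * θ * Q n) := mul_le_mul_of_nonneg_left hh hM.le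
        _ = 2 * M * θ * Q n := by ring
    calc ‖u i j - u m n‖ ≤ ‖u i j - u m j‖ + ‖u m j - u m n‖ :=
          norm_sub_le_norm_sub_add_norm_sub _ _ _
      _ ≤ 2 * M * θ + 2 * M * θ := add_le_add (le_trans hri h1) (le_trans hcj h2)
      _ = 4 * M * θ := by ring
  have est1 : ‖((D : ℝ) : ℂ) * u m n - W‖ ≤ D * (4 * M * θ) := by
    have hrw : ((D : ℝ) : ℂ) * u m n - W =
        ∑ i ∈ Finset.Ico (m + 1) (m' + 1), ∑ j ∈ Finset.Ico (n + 1) (n' + 1),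
          ((p i * q j : ℝ) : ℂ) * (u m n - u i j) := by
      rw [← hDc, hWdef, Finset.sum_mul, ← Finset.sum_sub_distrib]
      refine Finset.sum_congr rfl fun i _ => ?_
      rw [Finset.sum_mul, ← Finset.sum_sub_distrib]
      refine Finset.sum_congr rfl fun j _ => ?_
      simp only [hcdef]
      ring
    calc ‖((D : ℝ) : ℂ) * u m n - W‖
        ≤ ∑ i ∈ Finset.Ico (m + 1) (m' + 1), ∑ j ∈ Finset.Ico (n + 1) (n' + 1),
            (p i * q j) * (4 * M * θ) := by
          rw [hrw]
          refine le_trans (norm_sum_le _ _) (Finset.sum_le_sum fun i hi => ?_)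
          refine le_trans (norm_sum_le _ _) (Finset.sum_le_sum fun j hj => ?_)
          rw [norm_mul, Complex.norm_real,
            Real.norm_of_nonneg (mul_nonneg (hp i).le (hq j).le), norm_sub_rev]
          exact mul_le_mul_of_nonneg_left (hosc i hi j hj)
            (mul_nonneg (hp i).le (hq j).le)
      _ = D * (4 * M * θ) := by
          simp only [← Finset.sum_mul]
          rw [hDcR]
  have est2 : ‖W - ((D : ℝ) : ℂ) * ℓ‖ ≤ 4 * (P m' * Q n') * ε₁ := by
    have hrw : W - ((D : ℝ) : ℂ) * ℓ =
        ((P m' * Q n' : ℝ) : ℂ) * (σ m' n' - ℓ) - ((P m * Q n' : ℝ) : ℂ) * (σ m n' - ℓ)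
        - ((P m' * Q n : ℝ) : ℂ) * (σ m' n - ℓ) + ((P m * Q n : ℝ) : ℂ) * (σ m n - ℓ) := by
      rw [hW, hSσ, hSσ, hSσ, hSσ, hDdef]
      push_cast
      ring
    have key : ∀ a b : ℕ, n₀ ≤ a → n₀ ≤ b → P a ≤ P m' → Q b ≤ Q n' →
        ‖((P a * Q b : ℝ) : ℂ) * (σ a b - ℓ)‖ ≤ P m' * Q n' * ε₁ := by
      intro a b ha hb hPa hQb
      rw [norm_mul, Complex.norm_real,
        Real.norm_of_nonneg (mul_nonneg (hPpos a).le (hQpos b).le)]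
      have h1 : ‖σ a b - ℓ‖ ≤ ε₁ := (hσε a b ha hb).le
      have h2 : P a * Q b ≤ P m' * Q n' :=
        mul_le_mul hPa hQb (hQpos b).le (hPpos m').le
      calc P a * Q b * ‖σ a b - ℓ‖ ≤ (P m' * Q n') * ε₁ :=
            mul_le_mul h2 h1 (norm_nonneg _)
              (mul_nonneg (hPpos m').le (hQpos n').le)
        _ = P m' * Q n' * ε₁ := by ring
    have k1 := key m' n' (by omega) (by omega) le_rfl le_rfl
    have k2 := key m n' hmn₀ (by omega) (hPmono (by omega)) le_rfl
    have k3 := key m' n (by omega) hnn₀ le_rfl (hQmono (by omega))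
    have k4 := key m n hmn₀ hnn₀ (hPmono (by omega)) (hQmono (by omega))
    rw [hrw]
    calc ‖((P m' * Q n' : ℝ) : ℂ) * (σ m' n' - ℓ) - ((P m * Q n' : ℝ) : ℂ) * (σ m n' - ℓ)
        - ((P m' * Q n : ℝ) : ℂ) * (σ m' n - ℓ) + ((P m * Q n : ℝ) : ℂ) * (σ m n - ℓ)‖
        ≤ ‖((P m' * Q n' : ℝ) : ℂ) * (σ m' n' - ℓ) - ((P m * Q n' : ℝ) : ℂ) * (σ m n' - ℓ)
          - ((P m' * Q n : ℝ) : ℂ) * (σ m' n - ℓ)‖ + ‖((P m * Q n : ℝ) : ℂ) * (σ m n - ℓ)‖ :=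
          norm_add_le _ _
      _ ≤ ‖((P m' * Q n' : ℝ) : ℂ) * (σ m' n' - ℓ) - ((P m * Q n' : ℝ) : ℂ) * (σ m n' - ℓ)‖
          + ‖((P m' * Q n : ℝ) : ℂ) * (σ m' n - ℓ)‖ + ‖((P m * Q n : ℝ) : ℂ) * (σ m n - ℓ)‖ := by
          gcongr
          exact norm_sub_le _ _
      _ ≤ ‖((P m' * Q n' : ℝ) : ℂ) * (σ m' n' - ℓ)‖ + ‖((P m * Q n' : ℝ) : ℂ) * (σ m n' - ℓ)‖
          + ‖((P m' * Q n : ℝ) : ℂ) * (σ m' n - ℓ)‖ + ‖((P m * Q n : ℝ) : ℂ) * (σ m n - ℓ)‖ := by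
          gcongr
          exact norm_sub_le _ _
      _ ≤ P m' * Q n' * ε₁ + P m' * Q n' * ε₁ + P m' * Q n' * ε₁ + P m' * Q n' * ε₁ := by
          gcongr <;> assumption
      _ = 4 * (P m' * Q n') * ε₁ := by ring
  -- final assembly
  have hfrac : 4 * (P m' * Q n') * ε₁ / D ≤ ε / 4 := by
    rw [div_le_iff₀ hDpos]
    have hPm := hPpos m
    have hQn := hQpos n
    have hD1 : θ * P m ≤ P m' - P m := by nlinarith
    have hD2 : θ * Q n ≤ Q n' - Q n := by nlinarith
    have hDge : θ ^ 2 * (P m * Q n) ≤ D := by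
      rw [hDdef]
      nlinarith [hDpos]
    have hθ' : (1 + 2*θ)^2 ≤ 3 := by
      have hθθ : θ * θ ≤ θ * (1/3) := mul_le_mul_of_nonneg_left hθ3 hθpos.le
      nlinarith
    have hPQ' : P m' * Q n' ≤ 3 * (P m * Q n) := by
      have hx : P m' * Q n' ≤ ((1 + 2*θ) * P m) * ((1 + 2*θ) * Q n) :=
        mul_le_mul hm'ub hn'ub (hQpos n').le (mul_nonneg (by linarith) hPm.le)
      nlinarith [hθ', mul_pos hPm hQn]
    rw [hε₁def]
    have hk : (0:ℝ) ≤ ε * θ ^ 2 / 48 :=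
      div_nonneg (mul_nonneg hε.le (sq_nonneg θ)) (by norm_num)
    have hA := mul_le_mul_of_nonneg_left hPQ' hk
    have hB := mul_le_mul_of_nonneg_left hDge (by linarith : (0:ℝ) ≤ ε / 4)
    nlinarith [hA, hB]
  have heq : u m n - ℓ = (((D : ℝ) : ℂ) * u m n - W + (W - ((D : ℝ) : ℂ) * ℓ)) / ((D : ℝ) : ℂ) := by
    have hD0 : ((D : ℝ) : ℂ) ≠ 0 := by exact_mod_cast ne_of_gt hDpos
    field_simp
    ring
  calc ‖u m n - ℓ‖ = ‖((D : ℝ) : ℂ) * u m n - W + (W - ((D : ℝ) : ℂ) * ℓ)‖ / D := by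
        rw [heq, norm_div, Complex.norm_real, Real.norm_of_nonneg (le_of_lt hDpos)]
    _ ≤ (D * (4 * M * θ) + 4 * (P m' * Q n') * ε₁) / D := by
        apply (div_le_div_iff_of_pos_right hDpos).mpr
        exact le_trans (norm_add_le _ _) (add_le_add est1 est2)
    _ = 4 * M * θ + 4 * (P m' * Q n') * ε₁ / D := by
        have hD0 : D ≠ 0 := hDpos.ne'
        field_simp
    _ ≤ ε / 4 + ε / 4 := add_le_add hθε hfrac
    _ < ε := by linarith
end

section
/- Let (u_{mn}) be a double sequence of real numbers satisfying both one-sided Landau-type conditions: there exists M > 0 with (P_m/p_m)(u_{mn} − u_{m−1,n}) ≥ −M and (Q_n/q_n)(u_{mn} − u_{m,n−1}) ≥ −M for all sufficiently large m, n, where (P_m), (Q_n) are strictly increasing unbounded partial sums of positive weights with P_{m−1}/P_m → 1 and Q_{n−1}/Q_n → 1. Then (u_{mn}) is slowly decreasing relative to both (P_m) and (Q_n), i.e., lim_{λ,κ→1⁺} liminf_{m,n→∞} min over P_m ≤ P_i ≤ λP_m and Q_n ≤ Q_j ≤ κQ_n of (u_{ij} − u_{mn}) ≥ 0. -/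
open Filter

private lemma telescope_aux (v : ℕ → ℝ) (p P : ℕ → ℝ) (hp : ∀ m, 0 < p m)
    (hP : ∀ m : ℕ, P m = ∑ i ∈ Finset.range (m + 1), p i)
    (M : ℝ) (hM : 0 ≤ M) (n₁ : ℕ)
    (hL : ∀ t : ℕ, n₁ ≤ t → P t / p t * (v t - v (t - 1)) ≥ -M) :
    ∀ m i : ℕ, n₁ ≤ m → m ≤ i → v i - v m ≥ -(M * (P i - P m) / P m) := by
  have hPpos : ∀ m, 0 < P m := by
    intro m
    rw [hP]
    exact Finset.sum_pos (fun i _ => hp i) ⟨0, Finset.mem_range.2 (Nat.succ_pos m)⟩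
  have hstep : ∀ t : ℕ, P (t + 1) = P t + p (t + 1) := by
    intro t
    rw [hP, hP, Finset.sum_range_succ]
  have hPmono : Monotone P := by
    apply monotone_nat_of_le_succ
    intro t
    rw [hstep]
    linarith [hp (t + 1)]
  intro m i hm hmi
  induction i with
  | zero =>
    have : m = 0 := Nat.le_zero.1 hmi
    subst this
    simp [le_refl, div_nonneg, hM, (hPpos 0).le]
  | succ i ih =>
    rcases Nat.lt_or_ge m (i + 1) with h | h
    · have hmi' : m ≤ i := Nat.lt_succ_iff.1 h
      have ih' := ih hmi'
      -- bound on the last increment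
      have hL' := hL (i + 1) (le_trans hm (Nat.le_succ_of_le hmi'))
      have hpi : 0 < p (i + 1) := hp (i + 1)
      have hPi : 0 < P (i + 1) := hPpos (i + 1)
      have hPm : 0 < P m := hPpos m
      have hPmi : P m ≤ P (i + 1) := hPmono (Nat.le_succ_of_le hmi')
      simp only [Nat.add_sub_cancel] at hL'
      have hinc : v (i + 1) - v i ≥ -(M * p (i + 1) / P (i + 1)) := by
        have h1 : -M * (p (i + 1) / P (i + 1)) ≤
            (P (i + 1) / p (i + 1) * (v (i + 1) - v i)) * (p (i + 1) / P (i + 1)) := by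
          apply mul_le_mul_of_nonneg_right hL'
          positivity
        have h2 : (P (i + 1) / p (i + 1) * (v (i + 1) - v i)) * (p (i + 1) / P (i + 1))
            = v (i + 1) - v i := by
          field_simp
        rw [h2] at h1
        have : -M * (p (i + 1) / P (i + 1)) = -(M * p (i + 1) / P (i + 1)) := by ring
        linarith [this ▸ h1]
      have hfrac : M * p (i + 1) / P (i + 1) ≤ M * p (i + 1) / P m := by
        apply div_le_div_of_nonneg_left (by positivity) hPm hPmi
      have hPsucc : P (i + 1) - P m = (P i - P m) + p (i + 1) := by
        rw [hstep]; ring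
      have : v (i + 1) - v m = (v (i + 1) - v i) + (v i - v m) := by ring
      rw [this, hPsucc]
      have : M * ((P i - P m) + p (i + 1)) / P m
          = M * (P i - P m) / P m + M * p (i + 1) / P m := by ring
      rw [this]
      linarith
    · have : m = i + 1 := le_antisymm hmi h
      subst this
      simp [hM, (hPpos (i + 1)).le]

/-- Both one-sided Landau-type conditions imply slow decrease relative to both (P_m)
and (Q_n). -/
theorem stmt19 (u : ℕ → ℕ → ℝ) (p q : ℕ → ℝ)
    (hp : ∀ m, 0 < p m) (hq : ∀ n, 0 < q n)
    (P Q : ℕ → ℝ)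
    (hP : ∀ m : ℕ, P m = ∑ i ∈ Finset.range (m + 1), p i)
    (hQ : ∀ n : ℕ, Q n = ∑ j ∈ Finset.range (n + 1), q j)
    (hPtop : Tendsto P atTop atTop) (hQtop : Tendsto Q atTop atTop)
    (hPratio : Tendsto (fun m : ℕ => P (m - 1) / P m) atTop (nhds 1))
    (hQratio : Tendsto (fun n : ℕ => Q (n - 1) / Q n) atTop (nhds 1))
    (M : ℝ) (hM : 0 < M)
    (hLandau : ∃ n₁ : ℕ, ∀ m n : ℕ, n₁ ≤ m → n₁ ≤ n →
      P m / p m * (u m n - u (m - 1) n) ≥ -M ∧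
      Q n / q n * (u m n - u m (n - 1)) ≥ -M) :
    ∀ ε > (0 : ℝ), ∃ n₀ : ℕ, ∃ l > (1 : ℝ), ∃ k > (1 : ℝ),
      ∀ m n i j : ℕ, n₀ ≤ m → n₀ ≤ n → m ≤ i → n ≤ j →
        P i ≤ l * P m → Q j ≤ k * Q n → u i j - u m n ≥ -ε := by
  obtain ⟨n₁, hL⟩ := hLandau
  intro ε hε
  have hpos : 0 < ε / (2 * M) := div_pos hε (by linarith)
  refine ⟨n₁, 1 + ε / (2 * M), by linarith, 1 + ε / (2 * M), by linarith, ?_⟩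
  intro m n i j hm hn hmi hnj hPl hQk
  have hPpos : ∀ m, 0 < P m := by
    intro m
    rw [hP]
    exact Finset.sum_pos (fun i _ => hp i) ⟨0, Finset.mem_range.2 (Nat.succ_pos m)⟩
  have hQpos : ∀ n, 0 < Q n := by
    intro n
    rw [hQ]
    exact Finset.sum_pos (fun i _ => hq i) ⟨0, Finset.mem_range.2 (Nat.succ_pos n)⟩
  -- first coordinate, at column j
  have h1 : u i j - u m j ≥ -(M * (P i - P m) / P m) := by
    refine telescope_aux (fun t => u t j) p P hp hP M hM.le n₁ ?_ m i hm hmi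
    intro t ht
    exact (hL t j ht (le_trans hn hnj)).1
  -- second coordinate, at row m
  have h2 : u m j - u m n ≥ -(M * (Q j - Q n) / Q n) := by
    refine telescope_aux (fun t => u m t) q Q hq hQ M hM.le n₁ ?_ n j hn hnj
    intro t ht
    exact (hL m t hm ht).2
  have hPm := hPpos m
  have hQn := hQpos n
  have hb1 : M * (P i - P m) / P m ≤ ε / 2 := by
    rw [div_le_iff₀ hPm]
    have h3 := mul_le_mul_of_nonneg_left hPl hM.le
    have h4 : M * ((1 + ε / (2 * M)) * P m) = M * P m + ε / 2 * P m := by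
      field_simp
    linarith
  have hb2 : M * (Q j - Q n) / Q n ≤ ε / 2 := by
    rw [div_le_iff₀ hQn]
    have h3 := mul_le_mul_of_nonneg_left hQk hM.le
    have h4 : M * ((1 + ε / (2 * M)) * Q n) = M * Q n + ε / 2 * Q n := by
      field_simp
    linarith
  have : u i j - u m n = (u i j - u m j) + (u m j - u m n) := by ring
  linarith [this]
end
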